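/- Let T satisfy the sectorial-type hypotheses, n ∈ ℕ, and x ∈ X. Then for all t ≥ 1, K(t^{-n}, x) ≤ M₁·ψ_x(t) + M₂·t^{-n}·‖x‖ for constants M₁, M₂ ≥ 0 depending only on n and M, where K is the K-functional of the couple X, D(Tⁿ) and ψ_x is the resolvent quantity (‖TⁿQ_{te^{iω}}(T)^{−n/2}x‖ for n even; ‖T^{n+1}Q_{te^{iω}}(T)^{−(n+1)/2}x‖ + t‖TⁿQ_{te^{iω}}(T)^{−(n+1)/2}x‖ for n odd). -/

import Mathlib

noncomputable section

open MulOpposite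

local notation "ℍ" => Quaternion ℝ

/-- The domain `D(Tⁿ)` of the `n`-th power of an operator `T` with domain `D`:
all `x` such that `x, Tx, …, T^{n-1}x ∈ D`. -/
def domN {X : Type*} [AddCommGroup X] [Module ℍᵐᵒᵖ X]
    (T : Module.End ℍᵐᵒᵖ X) (D : Set X) (n : ℕ) : Set X :=
  {x | ∀ j < n, (T ^ j) x ∈ D}

/-- The operator `Q_s(T) = T² − 2 Re(s) T + |s|²` for a quaternion `s`. -/
def Qs {X : Type*} [AddCommGroup X] [Module ℍᵐᵒᵖ X] [Module ℝ X]
    [SMulCommClass ℍᵐᵒᵖ ℝ X] (T : Module.End ℍᵐᵒᵖ X) (s : ℍ) : Module.End ℍᵐᵒᵖ X :=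
  T ^ 2 - (2 * s.re) • T + (‖s‖ ^ 2) • 1

/-- The operator `Q_{t e^{iω}}(T) = T² − 2 t cos(ω) T + t²` associated with the point
`t e^{iω}` of the ray `S_ω` (independent of the imaginary unit `i ∈ 𝕊`). -/
def Qray {X : Type*} [AddCommGroup X] [Module ℍᵐᵒᵖ X] [Module ℝ X]
    [SMulCommClass ℍᵐᵒᵖ ℝ X] (T : Module.End ℍᵐᵒᵖ X) (ω t : ℝ) : Module.End ℍᵐᵒᵖ X :=
  T ^ 2 - (2 * t * Real.cos ω) • T + (t ^ 2) • 1

open MeasureTheory ENNReal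

/-- The `K`-functional of the couple `X`, `D(Tⁿ)` (the latter with graph norm). -/
def KX {X : Type*} [NormedAddCommGroup X] [Module ℍᵐᵒᵖ X]
    (T : Module.End ℍᵐᵒᵖ X) (D : Set X) (n : ℕ) (t : ℝ) (x : X) : ℝ :=
  sInf {r | ∃ a b, x = a + b ∧ b ∈ domN T D n ∧ r = ‖a‖ + t * (‖b‖ + ‖(T ^ n) b‖)}

/-- The measure `dt/t` on `(0,∞)`. -/
def mustar : Measure ℝ :=
  (volume.restrict (Set.Ioi (0:ℝ))).withDensity fun t => ENNReal.ofReal t⁻¹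

/-- The resolvent quantity `ψ_x(t)` of the paper (`R t` playing the role of
`Q_{te^{iω}}(T)⁻¹`): `‖Tⁿ (R t)^{n/2} x‖` for even `n`, and
`‖T^{n+1} (R t)^{(n+1)/2} x‖ + t ‖Tⁿ (R t)^{(n+1)/2} x‖` for odd `n`. -/
def psi {X : Type*} [NormedAddCommGroup X] [Module ℍᵐᵒᵖ X]
    (T : Module.End ℍᵐᵒᵖ X) (R : ℝ → Module.End ℍᵐᵒᵖ X) (n : ℕ) (x : X) (t : ℝ) : ℝ :=
  if Even n then ‖(T ^ n) (((R t) ^ (n / 2)) x)‖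
  else ‖(T ^ (n + 1)) (((R t) ^ ((n + 1) / 2)) x)‖
    + t * ‖(T ^ n) (((R t) ^ ((n + 1) / 2)) x)‖

/-!
Write `Q = Q_{te^{iω}}(T)` and `R = R t = Q⁻¹`. Since `Q` is the polynomial
`X² − 2t cos ω X + t²` in `T`, expanding `x = Qⁿ Rⁿ x` gives `x = ∑_{p ≤ 2n} d_p Tᵖ Rⁿ x` with
`|d_p| ≤ 4ⁿ t^{2n−p}`. The terms with `p ≤ n` form the `D(Tⁿ)`-component `b`, the others the
`X`-component `a`. Iterating `T²R = 1 + 2t cos ω TR − t²R` with `‖R‖ ≤ M/t²`, `‖TR‖ ≤ M/t` gives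
`‖T^k R^m‖ ≲ t^{k−2m}` for `k ≤ 2m`, which bounds `‖b‖` by `‖x‖`; commuting `Tⁿ` (or `T^{n+1}`)
past `R^{⌊n/2⌋}` bounds `T^{n+j} Rⁿ x` by `t^{j−n} ψ_x(t)`, which controls `‖a‖` and `‖Tⁿ b‖`.
Throughout, the norm identity `‖x s‖ = ‖x‖ |s|` makes real scalars act as real quaternions, so
the right linear operators `T` and `R t` are real linear.
-/

open Polynomial Finset

section QuaternionicScalars

variable {X : Type*} [NormedAddCommGroup X] [NormedSpace ℝ X] [Module ℍᵐᵒᵖ X]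

theorem real_smul_eq_op_smul (hnorm : ∀ (x : X) (s : ℍ), ‖(op s) • x‖ = ‖x‖ * ‖s‖)
    (r : ℝ) (x : X) : r • x = op (r : ℍ) • x := by
  have hlip : LipschitzWith ‖x‖₊ fun s : ℍ => op s • x := by
    refine LipschitzWith.of_dist_le_mul fun s s' => ?_
    rw [dist_eq_norm, dist_eq_norm, ← sub_smul, ← op_sub, hnorm]
    rfl
  refine congrFun (Continuous.ext_on Rat.denseRange_cast (continuous_id.smul continuous_const)
    (hlip.continuous.comp Quaternion.continuous_coe) ?_) r
  rintro _ ⟨q, rfl⟩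
  have hq : op ((q : ℝ) : ℍ) = (q : ℍᵐᵒᵖ) := by rw [← op_ratCast, Quaternion.coe_ratCast]
  simpa [hq] using map_ratCast_smul (AddMonoidHom.id X) ℝ ℍᵐᵒᵖ q x

theorem isScalarTower_of_norm_op_smul (hnorm : ∀ (x : X) (s : ℍ), ‖(op s) • x‖ = ‖x‖ * ‖s‖) :
    IsScalarTower ℝ ℍᵐᵒᵖ X where
  smul_assoc r s x := by
    induction s using MulOpposite.rec' with | _ q => ?_
    rw [real_smul_eq_op_smul hnorm, ← mul_smul, ← op_mul, ← op_smul, Quaternion.mul_coe_eq_smul]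

end QuaternionicScalars

section Domain

variable {X : Type*} [AddCommGroup X] [Module ℍᵐᵒᵖ X] (T : Module.End ℍᵐᵒᵖ X)
  (D : Submodule ℍᵐᵒᵖ X)

def domNSubmodule (n : ℕ) : Submodule ℍᵐᵒᵖ X where
  carrier := domN T D n
  add_mem' hx hy j hj := by simpa using D.add_mem (hx j hj) (hy j hj)
  zero_mem' j _ := by simp
  smul_mem' c x hx j hj := by simpa using D.smul_mem c (hx j hj)

variable {T D}

theorem mem_domNSubmodule {n : ℕ} {x : X} : x ∈ domNSubmodule T D n ↔ x ∈ domN T D n :=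
  Iff.rfl

theorem mem_domN_zero (x : X) : x ∈ domN T D 0 := fun _ h => absurd h (Nat.not_lt_zero _)

theorem mem_domN_succ {n : ℕ} {x : X} :
    x ∈ domN T D (n + 1) ↔ x ∈ D ∧ T x ∈ domN T D n := by
  simp only [domN, Set.mem_ofPred_eq, Nat.forall_lt_succ_left', pow_zero,
    Module.End.one_apply, SetLike.mem_coe, pow_succ, Module.End.mul_apply]

theorem mem_domN_two {x : X} : x ∈ domN T D 2 ↔ x ∈ D ∧ T x ∈ D := by
  rw [mem_domN_succ, mem_domN_succ]
  simp [mem_domN_zero]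

theorem domN_antitone : Antitone (domN T D) :=
  fun _ _ hmn _ hx j hj => hx j (lt_of_lt_of_le hj hmn)

end Domain

section NormedRightModule

variable {X : Type*} [NormedAddCommGroup X] [Module ℍᵐᵒᵖ X] {T : Module.End ℍᵐᵒᵖ X}

theorem KX_le {D : Set X} {n : ℕ} {τ : ℝ} {x a b : X} (hτ : 0 ≤ τ) (hx : x = a + b)
    (hb : b ∈ domN T D n) : KX T D n τ x ≤ ‖a‖ + τ * (‖b‖ + ‖(T ^ n) b‖) :=
  csInf_le ⟨0, by rintro _ ⟨a', b', -, -, rfl⟩; positivity⟩ ⟨a, b, hx, hb, rfl⟩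

theorem psi_two_mul (R : ℝ → Module.End ℍᵐᵒᵖ X) (m : ℕ) (x : X) (t : ℝ) :
    psi T R (2 * m) x t = ‖(T ^ (2 * m)) ((R t ^ m) x)‖ := by
  rw [psi, if_pos (even_two_mul m), Nat.mul_div_cancel_left m two_pos]

theorem psi_two_mul_add_one (R : ℝ → Module.End ℍᵐᵒᵖ X) (m : ℕ) (x : X) (t : ℝ) :
    psi T R (2 * m + 1) x t = ‖(T ^ (2 * m + 2)) ((R t ^ (m + 1)) x)‖
      + t * ‖(T ^ (2 * m + 1)) ((R t ^ (m + 1)) x)‖ := by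
  rw [psi, if_neg (Nat.not_even_two_mul_add_one m), show (2 * m + 1 + 1) / 2 = m + 1 by omega]

theorem norm_pow_apply_mul_sq_le {S : Module.End ℍᵐᵒᵖ X} {M t : ℝ}
    (hS1 : ∀ x, ‖S x‖ ≤ M / t ^ 2 * ‖x‖) (hS2 : ∀ x, ‖T (S x)‖ ≤ M / t * ‖x‖) (ht : 0 < t)
    {k : ℕ} (hk : k ≤ 1) (y : X) :
    ‖(T ^ k) (S y)‖ * t ^ 2 ≤ M * t ^ k * ‖y‖ := by
  interval_cases k
  · rw [pow_zero, Module.End.one_apply, pow_zero, mul_one, ← le_div_iff₀ (by positivity),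
      mul_div_right_comm]
    exact hS1 y
  · calc ‖(T ^ 1) (S y)‖ * t ^ 2 ≤ (M / t * ‖y‖) * t ^ 2 := by
          rw [pow_one]; gcongr; exact hS2 y
      _ = M * t ^ 1 * ‖y‖ := by field_simp

end NormedRightModule

theorem mul_le_mul_of_mul_pow_le {c v α β t : ℝ} {p q : ℕ} (ht : 0 < t) (hc0 : 0 ≤ c)
    (hv0 : 0 ≤ v) (hc : c * t ^ p ≤ α * t ^ q) (hv : v * t ^ q ≤ β * t ^ p) :
    c * v ≤ α * β := by
  refine le_of_mul_le_mul_right ?_ (by positivity : 0 < t ^ p * t ^ q)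
  calc c * v * (t ^ p * t ^ q) = (c * t ^ p) * (v * t ^ q) := by ring
    _ ≤ (α * t ^ q) * (β * t ^ p) :=
      mul_le_mul hc hv (by positivity) ((by positivity : 0 ≤ c * t ^ p).trans hc)
    _ = α * β * (t ^ p * t ^ q) := by ring

def rayPolynomial (ω t : ℝ) : ℝ[X] := X ^ 2 - C (2 * t * Real.cos ω) * X + C (t ^ 2)

theorem natDegree_rayPolynomial_pow_le (ω t : ℝ) (n : ℕ) :
    ((rayPolynomial ω t) ^ n).natDegree ≤ 2 * n := by
  rw [mul_comm]
  exact natDegree_pow_le_of_le n (by unfold rayPolynomial; compute_degree)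

theorem abs_coeff_mul_X_pow_mul_le {f : ℝ[X]} {t B : ℝ} (ht : 0 ≤ t) (hB : 0 ≤ B)
    (hf : ∀ i, |f.coeff i| * t ^ i ≤ B) (j p : ℕ) :
    |(f * X ^ j).coeff p| * t ^ p ≤ t ^ j * B := by
  rw [coeff_mul_X_pow']
  split_ifs with h
  · obtain ⟨i, rfl⟩ := Nat.exists_eq_add_of_le' h
    rw [Nat.add_sub_cancel, pow_add, ← mul_assoc, mul_comm]
    exact mul_le_mul_of_nonneg_left (hf i) (by positivity)
  · simp only [abs_zero, zero_mul]
    positivity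

theorem abs_coeff_rayPolynomial_pow_mul_le {ω t : ℝ} (ht : 0 ≤ t) (n p : ℕ) :
    |((rayPolynomial ω t) ^ n).coeff p| * t ^ p ≤ 4 ^ n * t ^ (2 * n) := by
  induction n generalizing p with
  | zero =>
    rcases p with _ | p <;> simp [coeff_one]
  | succ n ih =>
    set f := rayPolynomial ω t ^ n
    have hB : (0 : ℝ) ≤ 4 ^ n * t ^ (2 * n) := by positivity
    have hcos : |2 * t * Real.cos ω| ≤ 2 * t := by
      rw [abs_mul, abs_of_nonneg (by positivity)]
      exact mul_le_of_le_one_right (by positivity) (Real.abs_cos_le_one ω)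
    have hsplit : f * rayPolynomial ω t =
        f * X ^ 2 - C (2 * t * Real.cos ω) * (f * X ^ 1) + C (t ^ 2) * (f * X ^ 0) := by
      rw [rayPolynomial]; ring
    rw [pow_succ, hsplit, coeff_add, coeff_sub, coeff_C_mul, coeff_C_mul]
    have h2 := abs_coeff_mul_X_pow_mul_le ht hB ih 2 p
    have h1 := abs_coeff_mul_X_pow_mul_le ht hB ih 1 p
    have h0 := abs_coeff_mul_X_pow_mul_le ht hB ih 0 p
    calc |(f * X ^ 2).coeff p - 2 * t * Real.cos ω * (f * X ^ 1).coeff p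
          + t ^ 2 * (f * X ^ 0).coeff p| * t ^ p
        ≤ (|(f * X ^ 2).coeff p| + |2 * t * Real.cos ω| * |(f * X ^ 1).coeff p|
          + t ^ 2 * |(f * X ^ 0).coeff p|) * t ^ p := by
          gcongr
          refine (abs_add_le _ _).trans (add_le_add ((abs_sub _ _).trans_eq (by rw [abs_mul])) ?_)
          rw [abs_mul, abs_of_nonneg (by positivity)]
        _ = |(f * X ^ 2).coeff p| * t ^ p + |2 * t * Real.cos ω| * (|(f * X ^ 1).coeff p| * t ^ p)
          + t ^ 2 * (|(f * X ^ 0).coeff p| * t ^ p) := by ring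
        _ ≤ t ^ 2 * (4 ^ n * t ^ (2 * n)) + 2 * t * (t ^ 1 * (4 ^ n * t ^ (2 * n)))
          + t ^ 2 * (t ^ 0 * (4 ^ n * t ^ (2 * n))) := by gcongr
        _ = 4 ^ (n + 1) * t ^ (2 * (n + 1)) := by ring

section Resolvent

variable {X : Type*} [AddCommGroup X] [Module ℝ X] [Module ℍᵐᵒᵖ X] [SMulCommClass ℍᵐᵒᵖ ℝ X]
  {T S : Module.End ℍᵐᵒᵖ X} {D : Submodule ℍᵐᵒᵖ X} {ω t : ℝ}

theorem Qray_pow_apply_pow (hQS : ∀ x, Qray T ω t (S x) = x) (n : ℕ) (x : X) :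
    (Qray T ω t ^ n) ((S ^ n) x) = x := by
  induction n with
  | zero => rfl
  | succ n ih =>
    rw [pow_succ (Qray T ω t), pow_succ' S, Module.End.mul_apply, Module.End.mul_apply, hQS, ih]

theorem apply_apply_of_rightInv (hQS : ∀ x, Qray T ω t (S x) = x) (x : X) :
    T (T (S x)) = x + (2 * t * Real.cos ω) • T (S x) - t ^ 2 • S x := by
  calc T (T (S x)) = Qray T ω t (S x) + (2 * t * Real.cos ω) • T (S x) - t ^ 2 • S x := by
        simp only [Qray, LinearMap.add_apply, LinearMap.sub_apply, LinearMap.smul_apply,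
          pow_two, Module.End.mul_apply, Module.End.one_apply]
        abel
    _ = _ := by rw [hQS]

variable [IsScalarTower ℝ ℍᵐᵒᵖ X]

theorem aeval_rayPolynomial : aeval T (rayPolynomial ω t) = Qray T ω t := by
  simp [rayPolynomial, Qray, Algebra.smul_def]

theorem sum_coeff_smul_pow_apply (hQS : ∀ x, Qray T ω t (S x) = x) (n : ℕ) (x : X) :
    ∑ p ∈ range (2 * n + 1), ((rayPolynomial ω t) ^ n).coeff p • (T ^ p) ((S ^ n) x) = x := by
  conv_rhs => rw [← Qray_pow_apply_pow hQS n x, ← aeval_rayPolynomial, ← map_pow,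
    aeval_eq_sum_range' (Nat.lt_succ_of_le (natDegree_rayPolynomial_pow_le ω t n))]
  simp only [LinearMap.sum_apply, LinearMap.smul_apply]

theorem Qray_apply_comm (x : X) : Qray T ω t (T x) = T (Qray T ω t x) := by
  simp [Qray, pow_two, LinearMap.map_smul_of_tower]

theorem pow_add_two_apply_of_rightInv (hQS : ∀ x, Qray T ω t (S x) = x) (k : ℕ) (x : X) :
    (T ^ (k + 2)) (S x) =
      (T ^ k) x + (2 * t * Real.cos ω) • (T ^ (k + 1)) (S x) - t ^ 2 • (T ^ k) (S x) := by
  rw [pow_add, Module.End.mul_apply, pow_two, Module.End.mul_apply, apply_apply_of_rightInv hQS,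
    map_sub, map_add, LinearMap.map_smul_of_tower, LinearMap.map_smul_of_tower, pow_succ T k,
    Module.End.mul_apply]

theorem apply_mem_domN_add_two (hSdom : ∀ x, S x ∈ domN T D 2)
    (hQS : ∀ x, Qray T ω t (S x) = x) {n : ℕ} {y : X} (hy : y ∈ domN T D n) :
    S y ∈ domN T D (n + 2) := by
  induction n generalizing y with
  | zero => exact hSdom y
  | succ n ih =>
    have hSy := ih (domN_antitone n.le_succ hy)
    obtain ⟨hSy₀, hTSy⟩ := mem_domN_succ.1 hSy
    refine mem_domN_succ.2 ⟨hSy₀, mem_domN_succ.2 ⟨(mem_domN_succ.1 hTSy).1, ?_⟩⟩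
    rw [← mem_domNSubmodule, apply_apply_of_rightInv hQS]
    exact sub_mem (add_mem hy (Submodule.smul_of_tower_mem _ _ hTSy))
      (Submodule.smul_of_tower_mem _ _ (domN_antitone (Nat.le_succ _) hSy))

theorem pow_apply_mem_domN (hSdom : ∀ x, S x ∈ domN T D 2)
    (hQS : ∀ x, Qray T ω t (S x) = x) (m : ℕ) (x : X) : (S ^ m) x ∈ domN T D (2 * m) := by
  induction m with
  | zero => exact mem_domN_zero x
  | succ m ih =>
    rw [pow_succ', Module.End.mul_apply, mul_add_one]
    exact apply_mem_domN_add_two hSdom hQS ih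

theorem apply_comm_of_mem (hSdom : ∀ x, S x ∈ domN T D 2) (hQS : ∀ x, Qray T ω t (S x) = x)
    (hSQ : ∀ x ∈ domN T D 2, S (Qray T ω t x) = x) {y : X} (hy : y ∈ D) :
    T (S y) = S (T y) := by
  have hQ : Qray T ω t (T (S y) - S (T y)) = 0 := by
    rw [map_sub, Qray_apply_comm, hQS, hQS, sub_self]
  obtain ⟨hSy, hTSy⟩ := mem_domN_two.1 (hSdom y)
  obtain ⟨hSTy, hTSTy⟩ := mem_domN_two.1 (hSdom (T y))
  have hmem : T (S y) - S (T y) ∈ domN T D 2 := by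
    refine mem_domN_two.2 ⟨sub_mem hTSy hSTy, ?_⟩
    rw [map_sub, apply_apply_of_rightInv hQS]
    exact sub_mem (sub_mem (add_mem hy (D.smul_of_tower_mem _ hTSy))
      (D.smul_of_tower_mem _ hSy)) hTSTy
  rw [← sub_eq_zero, ← hSQ _ hmem, hQ, map_zero]

theorem pow_apply_comm_of_mem_domN (hSdom : ∀ x, S x ∈ domN T D 2)
    (hQS : ∀ x, Qray T ω t (S x) = x) (hSQ : ∀ x ∈ domN T D 2, S (Qray T ω t x) = x)
    {i : ℕ} {y : X} (hy : y ∈ domN T D i) : (T ^ i) (S y) = S ((T ^ i) y) := by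
  induction i generalizing y with
  | zero => rfl
  | succ i ih =>
    obtain ⟨hy0, hTy⟩ := mem_domN_succ.1 hy
    rw [pow_succ, Module.End.mul_apply, Module.End.mul_apply,
      apply_comm_of_mem hSdom hQS hSQ hy0, ih hTy]

theorem pow_apply_pow_comm_of_mem_domN (hSdom : ∀ x, S x ∈ domN T D 2)
    (hQS : ∀ x, Qray T ω t (S x) = x) (hSQ : ∀ x ∈ domN T D 2, S (Qray T ω t x) = x)
    {i : ℕ} {y : X} (hy : y ∈ domN T D i) (j : ℕ) :
    (T ^ i) ((S ^ j) y) = (S ^ j) ((T ^ i) y) := by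
  induction j generalizing y with
  | zero => rfl
  | succ j ih =>
    rw [pow_succ, Module.End.mul_apply, Module.End.mul_apply,
      ih (domN_antitone (Nat.le_add_right i 2) (apply_mem_domN_add_two hSdom hQS hy)),
      pow_apply_comm_of_mem_domN hSdom hQS hSQ hy]

variable (T S ω t) in
def lowOrderPart (n : ℕ) (x : X) : X :=
  ∑ p ∈ range (n + 1), ((rayPolynomial ω t) ^ n).coeff p • (T ^ p) ((S ^ n) x)

variable (T S ω t) in
def highOrderPart (n : ℕ) (x : X) : X :=
  ∑ j ∈ range n, ((rayPolynomial ω t) ^ n).coeff (n + 1 + j) • (T ^ (n + 1 + j)) ((S ^ n) x)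

theorem highOrderPart_add_lowOrderPart (hQS : ∀ x, Qray T ω t (S x) = x) (n : ℕ) (x : X) :
    highOrderPart T S ω t n x + lowOrderPart T S ω t n x = x := by
  rw [add_comm, lowOrderPart, highOrderPart, ← Finset.sum_range_add,
    show n + 1 + n = 2 * n + 1 by ring, sum_coeff_smul_pow_apply hQS]

theorem lowOrderPart_mem_domN (hSdom : ∀ x, S x ∈ domN T D 2)
    (hQS : ∀ x, Qray T ω t (S x) = x) (n : ℕ) (x : X) :
    lowOrderPart T S ω t n x ∈ domN T D n := by
  refine Submodule.sum_mem (domNSubmodule T D n) fun p hp =>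
    Submodule.smul_of_tower_mem _ _ (mem_domNSubmodule.2 fun j hj => ?_)
  rw [← Module.End.mul_apply, ← pow_add]
  exact pow_apply_mem_domN hSdom hQS n x (j + p) (by rw [mem_range] at hp; omega)

end Resolvent

section Estimates

variable {X : Type*} [NormedAddCommGroup X] [NormedSpace ℝ X] [Module ℍᵐᵒᵖ X]
  [SMulCommClass ℍᵐᵒᵖ ℝ X] [IsScalarTower ℝ ℍᵐᵒᵖ X] {T S : Module.End ℍᵐᵒᵖ X}
  {D : Submodule ℍᵐᵒᵖ X} {ω t M : ℝ}

theorem norm_pow_add_two_apply_le (hQS : ∀ x, Qray T ω t (S x) = x) (ht : 0 ≤ t) (k : ℕ)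
    (x : X) : ‖(T ^ (k + 2)) (S x)‖ ≤
      ‖(T ^ k) x‖ + 2 * t * ‖(T ^ (k + 1)) (S x)‖ + t ^ 2 * ‖(T ^ k) (S x)‖ := by
  have hcos : ‖2 * t * Real.cos ω‖ ≤ 2 * t := by
    rw [Real.norm_eq_abs, abs_mul, abs_of_nonneg (by positivity)]
    exact mul_le_of_le_one_right (by positivity) (Real.abs_cos_le_one ω)
  rw [pow_add_two_apply_of_rightInv hQS]
  refine (norm_sub_le _ _).trans (add_le_add ((norm_add_le _ _).trans (add_le_add le_rfl ?_)) ?_)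
  · exact (norm_smul_le _ _).trans (mul_le_mul_of_nonneg_right hcos (norm_nonneg _))
  · rw [norm_smul, Real.norm_of_nonneg (by positivity)]

theorem norm_pow_apply_pow_mul_le (hQS : ∀ x, Qray T ω t (S x) = x)
    (hS1 : ∀ x, ‖S x‖ ≤ M / t ^ 2 * ‖x‖) (hS2 : ∀ x, ‖T (S x)‖ ≤ M / t * ‖x‖) (hM : 0 ≤ M)
    (ht : 0 < t) {k m : ℕ} (hk : k ≤ 2 * m) (x : X) :
    ‖(T ^ k) ((S ^ m) x)‖ * t ^ (2 * m) ≤ (M + 4) ^ (k + m) * t ^ k * ‖x‖ := by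
  have hA : 1 ≤ M + 4 := by linarith
  induction m generalizing k with
  | zero =>
    obtain rfl : k = 0 := by omega
    simp
  | succ m ihm =>
    induction k using Nat.strong_induction_on with
    | _ k ihk =>
    rw [pow_succ' S m, Module.End.mul_apply]
    rcases Nat.lt_or_ge k 2 with hk₁ | hk₂
    · have hSm := ihm (k := 0) (Nat.zero_le _)
      simp only [pow_zero, Module.End.one_apply, zero_add, mul_one] at hSm
      calc ‖(T ^ k) (S ((S ^ m) x))‖ * t ^ (2 * (m + 1))
          = (‖(T ^ k) (S ((S ^ m) x))‖ * t ^ 2) * t ^ (2 * m) := by ring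
        _ ≤ (M * t ^ k * ‖(S ^ m) x‖) * t ^ (2 * m) := by
          gcongr ?_ * _; exact norm_pow_apply_mul_sq_le hS1 hS2 ht (by omega) _
        _ = M * t ^ k * (‖(S ^ m) x‖ * t ^ (2 * m)) := by ring
        _ ≤ (M + 4) ^ (k + 1) * t ^ k * ((M + 4) ^ m * ‖x‖) := by
          gcongr
          exact (le_add_of_nonneg_right (by norm_num)).trans (le_self_pow₀ hA k.succ_ne_zero)
        _ = (M + 4) ^ (k + (m + 1)) * t ^ k * ‖x‖ := by ring
    obtain ⟨k, rfl⟩ : ∃ k', k = k' + 2 := ⟨k - 2, by omega⟩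
    have h0 := ihm (k := k) (by omega)
    have h1 := ihk (k + 1) (by omega) (by omega)
    have h2 := ihk k (by omega) (by omega)
    rw [pow_succ' S m, Module.End.mul_apply] at h1 h2
    calc ‖(T ^ (k + 2)) (S ((S ^ m) x))‖ * t ^ (2 * (m + 1))
        ≤ (‖(T ^ k) ((S ^ m) x)‖ + 2 * t * ‖(T ^ (k + 1)) (S ((S ^ m) x))‖
            + t ^ 2 * ‖(T ^ k) (S ((S ^ m) x))‖) * t ^ (2 * (m + 1)) := by
          gcongr; exact norm_pow_add_two_apply_le hQS ht.le k _
      _ = (‖(T ^ k) ((S ^ m) x)‖ * t ^ (2 * m)) * t ^ 2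
            + 2 * t * (‖(T ^ (k + 1)) (S ((S ^ m) x))‖ * t ^ (2 * (m + 1)))
            + t ^ 2 * (‖(T ^ k) (S ((S ^ m) x))‖ * t ^ (2 * (m + 1))) := by ring
      _ ≤ ((M + 4) ^ (k + m) * t ^ k * ‖x‖) * t ^ 2
            + 2 * t * ((M + 4) ^ (k + 1 + (m + 1)) * t ^ (k + 1) * ‖x‖)
            + t ^ 2 * ((M + 4) ^ (k + (m + 1)) * t ^ k * ‖x‖) := by gcongr
      _ = (M + 4) ^ (k + m) * (1 + 2 * (M + 4) ^ 2 + (M + 4)) * t ^ (k + 2) * ‖x‖ := by ring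
      _ ≤ (M + 4) ^ (k + m) * (M + 4) ^ 3 * t ^ (k + 2) * ‖x‖ := by gcongr; nlinarith
      _ = (M + 4) ^ (k + 2 + (m + 1)) * t ^ (k + 2) * ‖x‖ := by ring

theorem norm_pow_add_apply_pow_mul_le (hSdom : ∀ x, S x ∈ domN T D 2)
    (hQS : ∀ x, Qray T ω t (S x) = x) (hSQ : ∀ x ∈ domN T D 2, S (Qray T ω t x) = x)
    (hS1 : ∀ x, ‖S x‖ ≤ M / t ^ 2 * ‖x‖) (hS2 : ∀ x, ‖T (S x)‖ ≤ M / t * ‖x‖) (hM : 0 ≤ M)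
    (ht : 0 < t) {i k l : ℕ} {u : X} (hu : u ∈ domN T D i) (hk : k ≤ 2 * l) :
    ‖(T ^ (i + k)) ((S ^ l) u)‖ * t ^ (2 * l) ≤ (M + 4) ^ (k + l) * t ^ k * ‖(T ^ i) u‖ := by
  rw [add_comm, pow_add, Module.End.mul_apply, pow_apply_pow_comm_of_mem_domN hSdom hQS hSQ hu]
  exact norm_pow_apply_pow_mul_le hQS hS1 hS2 hM ht hk _

theorem norm_pow_add_apply_mul_le_psi {R : ℝ → Module.End ℍᵐᵒᵖ X}
    (hRdom : ∀ x, R t x ∈ domN T D 2) (hQR : ∀ x, Qray T ω t (R t x) = x)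
    (hRQ : ∀ x ∈ domN T D 2, R t (Qray T ω t x) = x)
    (hR1 : ∀ x, ‖R t x‖ ≤ M / t ^ 2 * ‖x‖) (hR2 : ∀ x, ‖T (R t x)‖ ≤ M / t * ‖x‖)
    (hM : 0 ≤ M) (ht : 0 < t) {n j : ℕ} (hj : j ≤ n) (x : X) :
    ‖(T ^ (n + j)) ((R t ^ n) x)‖ * t ^ n ≤ (M + 4) ^ (2 * n) * t ^ j * psi T R n x t := by
  have hA : 1 ≤ M + 4 := by linarith
  have hbound : ∀ {i k l : ℕ} {u : X}, u ∈ domN T D i → k ≤ 2 * l →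
      ‖(T ^ (i + k)) ((R t ^ l) u)‖ * t ^ (2 * l) ≤ (M + 4) ^ (k + l) * t ^ k * ‖(T ^ i) u‖ :=
    norm_pow_add_apply_pow_mul_le hRdom hQR hRQ hR1 hR2 hM ht
  rcases Nat.even_or_odd' n with ⟨m, rfl | rfl⟩
  · rw [psi_two_mul, two_mul m, pow_add (R t), Module.End.mul_apply, ← two_mul]
    calc _ ≤ (M + 4) ^ (j + m) * t ^ j * ‖(T ^ (2 * m)) ((R t ^ m) x)‖ :=
          hbound (pow_apply_mem_domN hRdom hQR m x) hj
      _ ≤ _ := by gcongr; omega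
  have hw : (R t ^ (2 * m + 1)) x = (R t ^ m) ((R t ^ (m + 1)) x) := by
    rw [← Module.End.mul_apply, ← pow_add]; ring_nf
  rw [psi_two_mul_add_one, hw, pow_succ t (2 * m)]
  have hu := pow_apply_mem_domN hRdom hQR (m + 1) x
  have hz₁ := norm_nonneg ((T ^ (2 * m + 2)) ((R t ^ (m + 1)) x))
  have hz₂ : 0 ≤ t * ‖(T ^ (2 * m + 1)) ((R t ^ (m + 1)) x)‖ := by positivity
  rcases j with _ | j
  · have h := hbound (i := 2 * m + 1) (k := 0) (l := m) (domN_antitone (by omega) hu) (by omega)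
    calc _ = (‖(T ^ (2 * m + 1 + 0)) ((R t ^ m) ((R t ^ (m + 1)) x))‖ * t ^ (2 * m)) * t := by
          ring
      _ ≤ ((M + 4) ^ (0 + m) * t ^ 0 * ‖(T ^ (2 * m + 1)) ((R t ^ (m + 1)) x)‖) * t := by
          gcongr
      _ = (M + 4) ^ m * (t * ‖(T ^ (2 * m + 1)) ((R t ^ (m + 1)) x)‖) := by ring
      _ ≤ _ := by
          rw [pow_zero, mul_one]
          gcongr
          · omega
          · linarith
  · have h := hbound (i := 2 * m + 2) (k := j) (l := m) hu (by omega)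
    calc _ = (‖(T ^ (2 * m + 2 + j)) ((R t ^ m) ((R t ^ (m + 1)) x))‖ * t ^ (2 * m)) * t := by
          ring_nf
      _ ≤ ((M + 4) ^ (j + m) * t ^ j * ‖(T ^ (2 * m + 2)) ((R t ^ (m + 1)) x)‖) * t := by
          gcongr
      _ ≤ _ := by
          rw [mul_right_comm, mul_assoc _ (t ^ j), ← pow_succ]
          gcongr
          · omega
          · linarith

theorem norm_lowOrderPart_le (hQS : ∀ x, Qray T ω t (S x) = x)
    (hS1 : ∀ x, ‖S x‖ ≤ M / t ^ 2 * ‖x‖) (hS2 : ∀ x, ‖T (S x)‖ ≤ M / t * ‖x‖) (hM : 0 ≤ M)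
    (ht : 0 < t) (n : ℕ) (x : X) :
    ‖lowOrderPart T S ω t n x‖ ≤ (n + 1) * (4 ^ n * ((M + 4) ^ (2 * n) * ‖x‖)) := by
  calc _ ≤ ∑ _p ∈ range (n + 1), 4 ^ n * ((M + 4) ^ (2 * n) * ‖x‖) :=
        norm_sum_le_of_le _ fun p hp => ?_
    _ = _ := by simp
  rw [mem_range] at hp
  rw [norm_smul, Real.norm_eq_abs]
  refine mul_le_mul_of_mul_pow_le ht (abs_nonneg _) (norm_nonneg _)
    (abs_coeff_rayPolynomial_pow_mul_le ht.le n p) ?_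
  calc _ ≤ (M + 4) ^ (p + n) * t ^ p * ‖x‖ :=
        norm_pow_apply_pow_mul_le hQS hS1 hS2 hM ht (by omega) x
    _ ≤ _ := by
        rw [mul_right_comm]
        gcongr
        · linarith
        · omega

theorem norm_highOrderPart_le {R : ℝ → Module.End ℍᵐᵒᵖ X}
    (hRdom : ∀ x, R t x ∈ domN T D 2) (hQR : ∀ x, Qray T ω t (R t x) = x)
    (hRQ : ∀ x ∈ domN T D 2, R t (Qray T ω t x) = x)
    (hR1 : ∀ x, ‖R t x‖ ≤ M / t ^ 2 * ‖x‖) (hR2 : ∀ x, ‖T (R t x)‖ ≤ M / t * ‖x‖)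
    (hM : 0 ≤ M) (ht : 0 < t) (n : ℕ) (x : X) :
    ‖highOrderPart T (R t) ω t n x‖ ≤ n * (4 ^ n * ((M + 4) ^ (2 * n) * psi T R n x t)) := by
  calc _ ≤ ∑ _j ∈ range n, 4 ^ n * ((M + 4) ^ (2 * n) * psi T R n x t) :=
        norm_sum_le_of_le _ fun j hj => ?_
    _ = _ := by simp
  rw [mem_range] at hj
  rw [norm_smul, Real.norm_eq_abs]
  refine mul_le_mul_of_mul_pow_le ht (abs_nonneg _) (norm_nonneg _)
    (abs_coeff_rayPolynomial_pow_mul_le ht.le n _) ?_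
  have h := norm_pow_add_apply_mul_le_psi hRdom hQR hRQ hR1 hR2 hM ht (n := n) (j := j + 1)
    (by omega) x
  calc _ = (‖(T ^ (n + (j + 1))) ((R t ^ n) x)‖ * t ^ n) * t ^ n := by ring_nf
    _ ≤ ((M + 4) ^ (2 * n) * t ^ (j + 1) * psi T R n x t) * t ^ n := by gcongr
    _ = _ := by ring

theorem norm_pow_lowOrderPart_le {R : ℝ → Module.End ℍᵐᵒᵖ X}
    (hRdom : ∀ x, R t x ∈ domN T D 2) (hQR : ∀ x, Qray T ω t (R t x) = x)
    (hRQ : ∀ x ∈ domN T D 2, R t (Qray T ω t x) = x)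
    (hR1 : ∀ x, ‖R t x‖ ≤ M / t ^ 2 * ‖x‖) (hR2 : ∀ x, ‖T (R t x)‖ ≤ M / t * ‖x‖)
    (hM : 0 ≤ M) (ht : 0 < t) (n : ℕ) (x : X) :
    ‖(T ^ n) (lowOrderPart T (R t) ω t n x)‖ ≤
      (n + 1) * (4 ^ n * ((M + 4) ^ (2 * n) * (t ^ n * psi T R n x t))) := by
  rw [lowOrderPart, map_sum]
  calc _ ≤ ∑ _p ∈ range (n + 1), 4 ^ n * ((M + 4) ^ (2 * n) * (t ^ n * psi T R n x t)) :=
        norm_sum_le_of_le _ fun p hp => ?_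
    _ = _ := by simp
  rw [mem_range] at hp
  rw [LinearMap.map_smul_of_tower, ← Module.End.mul_apply, ← pow_add, norm_smul,
    Real.norm_eq_abs]
  refine mul_le_mul_of_mul_pow_le ht (abs_nonneg _) (norm_nonneg _)
    (abs_coeff_rayPolynomial_pow_mul_le ht.le n p) ?_
  have h := norm_pow_add_apply_mul_le_psi hRdom hQR hRQ hR1 hR2 hM ht (n := n) (j := p)
    (by omega) x
  calc _ = (‖(T ^ (n + p)) ((R t ^ n) x)‖ * t ^ n) * t ^ n := by ring
    _ ≤ ((M + 4) ^ (2 * n) * t ^ p * psi T R n x t) * t ^ n := by gcongr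
    _ = _ := by ring

end Estimates

theorem K_le_psi_general
    {X : Type*} [NormedAddCommGroup X] [NormedSpace ℝ X]
    [Module ℍᵐᵒᵖ X] [SMulCommClass ℍᵐᵒᵖ ℝ X]
    -- right Banach space: `‖x·s‖ = ‖x‖·|s|`
    (hnorm : ∀ (x : X) (s : ℍ), ‖(op s) • x‖ = ‖x‖ * ‖s‖)
    -- `T` is a closed right linear operator with domain `D`
    (T : Module.End ℍᵐᵒᵖ X) (D : Submodule ℍᵐᵒᵖ X)
    -- the ray `S_ω` lies in the S-resolvent set, with pseudo-resolvents `R t = Q_{te^{iω}}(T)⁻¹`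
    (ω : ℝ)
    (M : ℝ) (hM : 0 ≤ M)
    (R : ℝ → Module.End ℍᵐᵒᵖ X)
    (hRdom : ∀ t > 0, ∀ x : X, R t x ∈ domN T (D : Set X) 2)
    (hQR : ∀ t > 0, ∀ x : X, Qray T ω t (R t x) = x)
    (hRQ : ∀ t > 0, ∀ x ∈ domN T (D : Set X) 2, R t (Qray T ω t x) = x)
    -- the resolvent bounds `‖Q_s⁻¹‖ ≤ M/|s|²` and `‖T Q_s⁻¹‖ ≤ M/|s|` on `S_ω`
    (hR1 : ∀ t > 0, ∀ x : X, ‖R t x‖ ≤ M / t ^ 2 * ‖x‖)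
    (hR2 : ∀ t > 0, ∀ x : X, ‖T (R t x)‖ ≤ M / t * ‖x‖)
    (n : ℕ) :
    ∃ M₁ M₂ : ℝ, 0 ≤ M₁ ∧ 0 ≤ M₂ ∧ ∀ x : X, ∀ t ≥ (1:ℝ),
      KX T (D : Set X) n (t ^ (-(n : ℝ))) x ≤ M₁ * psi T R n x t + M₂ * ‖x‖ / t ^ n := by
  have := isScalarTower_of_norm_op_smul hnorm
  set B := 4 ^ n * (M + 4) ^ (2 * n)
  refine ⟨(2 * n + 1) * B, (n + 1) * B, by positivity, by positivity, fun x t ht => ?_⟩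
  have ht₀ : 0 < t := one_pos.trans_le ht
  rw [Real.rpow_neg ht₀.le, Real.rpow_natCast]
  calc KX T D n (t ^ n)⁻¹ x
      ≤ ‖highOrderPart T (R t) ω t n x‖ + (t ^ n)⁻¹ * (‖lowOrderPart T (R t) ω t n x‖
          + ‖(T ^ n) (lowOrderPart T (R t) ω t n x)‖) :=
        KX_le (by positivity) (highOrderPart_add_lowOrderPart (hQR t ht₀) n x).symm
          (lowOrderPart_mem_domN (hRdom t ht₀) (hQR t ht₀) n x)
    _ ≤ n * (4 ^ n * ((M + 4) ^ (2 * n) * psi T R n x t))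
          + (t ^ n)⁻¹ * ((n + 1) * (4 ^ n * ((M + 4) ^ (2 * n) * ‖x‖))
            + (n + 1) * (4 ^ n * ((M + 4) ^ (2 * n) * (t ^ n * psi T R n x t)))) := by
        gcongr
        · exact norm_highOrderPart_le (hRdom t ht₀) (hQR t ht₀) (hRQ t ht₀) (hR1 t ht₀)
            (hR2 t ht₀) hM ht₀ n x
        · exact norm_lowOrderPart_le (hQR t ht₀) (hR1 t ht₀) (hR2 t ht₀) hM ht₀ n x
        · exact norm_pow_lowOrderPart_le (hRdom t ht₀) (hQR t ht₀) (hRQ t ht₀) (hR1 t ht₀)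
            (hR2 t ht₀) hM ht₀ n x
    _ = (2 * n + 1) * B * psi T R n x t + (n + 1) * B * ‖x‖ / t ^ n := by
        field_simp
        ring

/-- the upper bound `K(t^{-n},x) ≤ M₁ ψ_x(t) + M₂ t^{-n} ‖x‖` for `t ≥ 1`,
where `K` is the `K`-functional of the couple `X, D(Tⁿ)`. -/
theorem K_le_psi
    {X : Type*} [NormedAddCommGroup X] [NormedSpace ℝ X] [CompleteSpace X]
    [Module ℍᵐᵒᵖ X] [SMulCommClass ℍᵐᵒᵖ ℝ X]
    -- right Banach space: `‖x·s‖ = ‖x‖·|s|`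
    (hnorm : ∀ (x : X) (s : ℍ), ‖(op s) • x‖ = ‖x‖ * ‖s‖)
    -- `T` is a closed right linear operator with domain `D`
    (T : Module.End ℍᵐᵒᵖ X) (D : Submodule ℍᵐᵒᵖ X)
    (hclosed : IsClosed {p : X × X | p.1 ∈ (D : Set X) ∧ T p.1 = p.2})
    -- the ray `S_ω` lies in the S-resolvent set, with pseudo-resolvents `R t = Q_{te^{iω}}(T)⁻¹`
    (ω : ℝ) (hω : ω ∈ Set.Icc (0:ℝ) Real.pi)
    (M : ℝ) (hM : 0 ≤ M)
    (R : ℝ → Module.End ℍᵐᵒᵖ X)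
    (hRcont : ∀ t > 0, Continuous (R t))
    (hRdom : ∀ t > 0, ∀ x : X, R t x ∈ domN T (D : Set X) 2)
    (hQR : ∀ t > 0, ∀ x : X, Qray T ω t (R t x) = x)
    (hRQ : ∀ t > 0, ∀ x ∈ domN T (D : Set X) 2, R t (Qray T ω t x) = x)
    -- the resolvent bounds `‖Q_s⁻¹‖ ≤ M/|s|²` and `‖T Q_s⁻¹‖ ≤ M/|s|` on `S_ω`
    (hR1 : ∀ t > 0, ∀ x : X, ‖R t x‖ ≤ M / t ^ 2 * ‖x‖)
    (hR2 : ∀ t > 0, ∀ x : X, ‖T (R t x)‖ ≤ M / t * ‖x‖)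
    (n : ℕ) (hn : 0 < n) :
    ∃ M₁ M₂ : ℝ, 0 ≤ M₁ ∧ 0 ≤ M₂ ∧ ∀ x : X, ∀ t ≥ (1:ℝ),
      KX T (D : Set X) n (t ^ (-(n : ℝ))) x ≤ M₁ * psi T R n x t + M₂ * ‖x‖ / t ^ n :=
  K_le_psi_general hnorm T D ω M hM R hRdom hQR hRQ hR1 hR2 n
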